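/- Let λ1 ≥ λ2 ≥ λ3 ≥ λ4 ≥ 0 with λ1 + λ2 + λ3 + λ4 = 1, and suppose Λ is a non-entangling (NE) map with Λ(ρ_λ) = σ_λ. Define F_{ij} := tr(Φ_i Λ(ξ_j)) for i, j ∈ {1,2,3,4}. Then all of the following hold: (1) ∑_j λ_j F_{ij} = λ_i for all i; (2) ∑_i F_{ij} = 1 for all j; (3) F_{ij} ≥ 0 for all i, j; (4) F_{i1} + F_{i3} ≤ 1 for all i; and (5) for all i and all a ∈ [0,1], both 2a(1−a)F_{i1} + a²F_{i2} + (1−a)²F_{i4} ≤ 1/2 and 2a(1−a)F_{i3} + a²F_{i2} + (1−a)²F_{i4} ≤ 1/2. -/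

import Mathlib

open Matrix Kronecker Polynomial
open scoped ComplexOrder

noncomputable section

/-- Index set for two qubits: ℂ²⊗ℂ² ≅ ℂ⁴ with basis |00⟩,|01⟩,|10⟩,|11⟩. -/
abbrev Q2 : Type := Fin 2 × Fin 2
abbrev Mat2 : Type := Matrix (Fin 2) (Fin 2) ℂ
abbrev Mat4 : Type := Matrix Q2 Q2 ℂ
abbrev Vec4 : Type := Q2 → ℂ

/-- Computational basis vector |ij⟩. -/
def ket (i j : Fin 2) : Vec4 := fun p => if p = (i, j) then 1 else 0

/-- The rank-one matrix |ψ⟩⟨φ|. -/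
def ketBra (ψ φ : Vec4) : Mat4 := fun p q => ψ p * star (φ q)

/-- The four Bell vectors |Φ1⟩,…,|Φ4⟩. -/
def bell : Fin 4 → Vec4 :=
  ![(Real.sqrt 2 : ℂ)⁻¹ • (ket 0 0 + ket 1 1),
    (Real.sqrt 2 : ℂ)⁻¹ • (ket 0 0 - ket 1 1),
    (Real.sqrt 2 : ℂ)⁻¹ • (ket 1 0 + ket 0 1),
    (Real.sqrt 2 : ℂ)⁻¹ • (ket 1 0 - ket 0 1)]

/-- Bell projectors Φ_i = |Φ_i⟩⟨Φ_i|. -/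
def bellProj (i : Fin 4) : Mat4 := ketBra (bell i) (bell i)

/-- A two-qubit density matrix: Hermitian positive semidefinite with trace one. -/
def IsDensity (ρ : Mat4) : Prop := ρ.PosSemidef ∧ ρ.trace = 1

/-- Unit vector in ℂ². -/
def IsUnitVec (u : Fin 2 → ℂ) : Prop := ∑ x, Complex.normSq (u x) = 1

/-- Separable two-qubit density matrix: convex mixture of products of pure states. -/
def SepState (ρ : Mat4) : Prop :=
  ∃ (n : ℕ) (p : Fin n → ℝ) (u v : Fin n → Fin 2 → ℂ),
    (∀ i, 0 ≤ p i) ∧ (∑ i, p i = 1) ∧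
    (∀ i, IsUnitVec (u i)) ∧ (∀ i, IsUnitVec (v i)) ∧
    ρ = ∑ i, (p i : ℂ) • (vecMulVec (u i) (star (u i)) ⊗ₖ vecMulVec (v i) (star (v i)))

/-- A SEP map: Kraus operators in product form, trace preserving. -/
def IsSEP (T : Mat4 → Mat4) : Prop :=
  ∃ (k : ℕ) (A B : Fin k → Mat2),
    (∑ i, (A i ⊗ₖ B i)ᴴ * (A i ⊗ₖ B i) = 1) ∧
    ∀ X, T X = ∑ i, (A i ⊗ₖ B i) * X * (A i ⊗ₖ B i)ᴴ

/-- CPTP map in Kraus form. -/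
def IsCPTP (T : Mat4 → Mat4) : Prop :=
  ∃ (k : ℕ) (K : Fin k → Mat4),
    (∑ i, (K i)ᴴ * K i = 1) ∧ ∀ X, T X = ∑ i, K i * X * (K i)ᴴ

/-- Non-entangling (NE) map: CPTP and maps separable states to separable states. -/
def IsNE (T : Mat4 → Mat4) : Prop :=
  IsCPTP T ∧ ∀ ρ, SepState ρ → SepState (T ρ)

/-- The MEMS state ρ_λ = λ1 Φ1 + λ2 |01⟩⟨01| + λ3 Φ2 + λ4 |10⟩⟨10|. -/
def mems (l1 l2 l3 l4 : ℝ) : Mat4 :=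
  (l1 : ℂ) • bellProj 0 + (l2 : ℂ) • ketBra (ket 0 1) (ket 0 1) +
  (l3 : ℂ) • bellProj 1 + (l4 : ℂ) • ketBra (ket 1 0) (ket 1 0)

/-- The Bell-diagonal state σ_λ = λ1 Φ1 + λ2 Φ2 + λ3 Φ3 + λ4 Φ4. -/
def bdiag (l1 l2 l3 l4 : ℝ) : Mat4 :=
  (l1 : ℂ) • bellProj 0 + (l2 : ℂ) • bellProj 1 + (l3 : ℂ) • bellProj 2 + (l4 : ℂ) • bellProj 3

/-- The normalized vector |Φ1(ε)⟩ = (|Φ1⟩ + ε|10⟩)/√(1+ε²). -/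
def phi1eps (ε : ℝ) : Vec4 :=
  (Real.sqrt (1 + ε ^ 2) : ℂ)⁻¹ • (bell 0 + (ε : ℂ) • ket 1 0)

/-- ξ1 = Φ1, ξ2 = |01⟩⟨01|, ξ3 = Φ2, ξ4 = |10⟩⟨10|. -/
def xi : Fin 4 → Mat4 :=
  ![bellProj 0, ketBra (ket 0 1) (ket 0 1), bellProj 1, ketBra (ket 1 0) (ket 1 0)]


lemma conj_s : star ((Real.sqrt 2 : ℂ)⁻¹) = (Real.sqrt 2 : ℂ)⁻¹ := by
  rw [star_inv₀, Complex.star_def, Complex.conj_ofReal]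

lemma sq2 : ((Real.sqrt 2 : ℝ) : ℂ) ^ 2 = 2 := by
  norm_cast
  rw [Real.sq_sqrt (by norm_num)]

lemma s_mul_s : ((Real.sqrt 2 : ℂ)⁻¹) * ((Real.sqrt 2 : ℂ)⁻¹) = 1/2 := by
  rw [← mul_inv, ← Complex.ofReal_mul, Real.mul_self_sqrt (by norm_num)]
  norm_num

lemma ketBra_mul_ketBra (ψ φ χ : Vec4) :
    ketBra ψ ψ * ketBra φ χ = (∑ q, star (ψ q) * φ q) • ketBra ψ χ := by
  ext p r
  simp only [Matrix.mul_apply, ketBra, Matrix.smul_apply, smul_eq_mul, Finset.sum_mul]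
  exact Finset.sum_congr rfl fun q _ => by ring

lemma trace_ketBra (ψ φ : Vec4) : (ketBra ψ φ).trace = ∑ p, ψ p * star (φ p) := rfl

lemma trace_ketBra_mul_ketBra (ψ φ : Vec4) :
    (ketBra ψ ψ * ketBra φ φ).trace
      = (∑ q, star (ψ q) * φ q) * star (∑ q, star (ψ q) * φ q) := by
  rw [ketBra_mul_ketBra, Matrix.trace_smul, trace_ketBra, smul_eq_mul, star_sum]
  congr 1
  refine Finset.sum_congr rfl fun q _ => ?_
  simp only [Complex.star_def, RingHom.map_mul, Complex.conj_conj]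

lemma kron_eq_ketBra (u v : Fin 2 → ℂ) :
    vecMulVec u (star u) ⊗ₖ vecMulVec v (star v)
      = ketBra (fun p => u p.1 * v p.2) (fun p => u p.1 * v p.2) := by
  ext p q
  simp [Matrix.kroneckerMap_apply, vecMulVec, ketBra, Pi.star_apply]
  ring

lemma bell_inner (i j : Fin 4) :
    ∑ q : Q2, star (bell i q) * bell j q = if i = j then 1 else 0 := by
  fin_cases i <;> fin_cases j <;>
    simp [bell, ket, Fintype.sum_prod_type, Fin.sum_univ_two, conj_s, Prod.ext_iff] <;>
    ring_nf <;>
    simp [s_mul_s, sq2]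

lemma bell_complete : ∑ i : Fin 4, bellProj i = (1 : Mat4) := by
  ext p q
  fin_cases p <;> fin_cases q <;>
    simp [Fin.sum_univ_four, bellProj, ketBra, bell, ket, Matrix.one_apply, conj_s,
      Prod.ext_iff] <;>
    ring_nf <;> simp [s_mul_s, sq2]

lemma ketBra_posSemidef (ψ : Vec4) : (ketBra ψ ψ).PosSemidef := by
  refine Matrix.posSemidef_iff_dotProduct_mulVec.mpr ⟨?_, ?_⟩
  · ext p q
    simp only [Matrix.conjTranspose_apply, ketBra, star_mul', star_star]
    ring
  · intro x
    have : dotProduct (star x) ((ketBra ψ ψ) *ᵥ x)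
        = star (∑ q, star (ψ q) * x q) * (∑ q, star (ψ q) * x q) := by
      simp only [dotProduct, Matrix.mulVec, ketBra, Pi.star_apply, star_sum, star_mul',
        star_star, Finset.sum_mul, Finset.mul_sum]
      rw [Finset.sum_comm]
      refine Finset.sum_congr rfl fun p _ => Finset.sum_congr rfl fun q _ => by
        simp only [Complex.star_def, RingHom.map_mul, Complex.conj_conj]
        ring
    rw [this]
    exact star_mul_self_nonneg _

lemma trace_ketBra_mul_nonneg (ψ : Vec4) (X : Mat4) (hX : X.PosSemidef) :
    0 ≤ (ketBra ψ ψ * X).trace := by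
  have : (ketBra ψ ψ * X).trace = dotProduct (star ψ) (X *ᵥ ψ) := by
    simp only [Matrix.trace, Matrix.diag, Matrix.mul_apply, ketBra, dotProduct,
      Matrix.mulVec, Pi.star_apply, Finset.mul_sum]
    rw [Finset.sum_comm]
    refine Finset.sum_congr rfl fun p _ => Finset.sum_congr rfl fun q _ => by ring
  rw [this]
  exact hX.dotProduct_mulVec_nonneg ψ

lemma CS2 (x y z w : ℂ) :
    Complex.normSq (x*z + y*w)
      ≤ (Complex.normSq x + Complex.normSq y) * (Complex.normSq z + Complex.normSq w) := by
  have h1 : ‖x*z+y*w‖ ≤ ‖x‖ * ‖z‖ + ‖y‖ * ‖w‖ := by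
    calc ‖x*z+y*w‖ ≤ ‖x*z‖ + ‖y*w‖ := norm_add_le _ _
    _ = _ := by rw [norm_mul, norm_mul]
  have h2 : Complex.normSq (x*z+y*w) = (‖x*z+y*w‖)^2 := (Complex.sq_norm _).symm
  rw [h2, ← Complex.sq_norm x, ← Complex.sq_norm y, ← Complex.sq_norm z, ← Complex.sq_norm w]
  nlinarith [norm_nonneg (x*z+y*w), norm_nonneg x, norm_nonneg y,
    norm_nonneg z, norm_nonneg w,
    sq_nonneg (‖x‖ * ‖w‖ - ‖y‖ * ‖z‖)]

lemma unitvec2 {u : Fin 2 → ℂ} (hu : IsUnitVec u) :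
    Complex.normSq (u 0) + Complex.normSq (u 1) = 1 := by
  simpa [IsUnitVec, Fin.sum_univ_two] using hu

lemma key_half (X : ℂ) (h : Complex.normSq X ≤ 1) :
    Complex.normSq ((Real.sqrt 2 : ℂ)⁻¹ * X) ≤ 1/2 := by
  rw [Complex.normSq_mul, Complex.normSq_inv, Complex.normSq_ofReal,
    Real.mul_self_sqrt (by norm_num)]
  nlinarith [Complex.normSq_nonneg X]

lemma bell_overlap (i : Fin 4) (u v : Fin 2 → ℂ) (hu : IsUnitVec u) (hv : IsUnitVec v) :
    Complex.normSq (∑ q : Q2, star (bell i q) * (u q.1 * v q.2)) ≤ 1/2 := by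
  have hu2 := unitvec2 hu
  have hv2 := unitvec2 hv
  have c1 : Complex.normSq (u 0 * v 0 + u 1 * v 1) ≤ 1 := by
    have h := CS2 (u 0) (u 1) (v 0) (v 1); rw [hu2, hv2] at h; linarith
  have c2 : Complex.normSq (u 0 * v 0 - u 1 * v 1) ≤ 1 := by
    have h := CS2 (u 0) (u 1) (v 0) (-(v 1))
    rw [Complex.normSq_neg, hu2, hv2, mul_neg, ← sub_eq_add_neg] at h; linarith
  have c3 : Complex.normSq (u 1 * v 0 + u 0 * v 1) ≤ 1 := by
    have h := CS2 (u 1) (u 0) (v 0) (v 1)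
    rw [hv2] at h
    have : Complex.normSq (u 1) + Complex.normSq (u 0) = 1 := by linarith
    rw [this] at h; linarith
  have c4 : Complex.normSq (u 1 * v 0 - u 0 * v 1) ≤ 1 := by
    have h := CS2 (u 1) (u 0) (v 0) (-(v 1))
    rw [Complex.normSq_neg, mul_neg, ← sub_eq_add_neg, hv2] at h
    have : Complex.normSq (u 1) + Complex.normSq (u 0) = 1 := by linarith
    rw [this] at h; linarith
  have e0 : (0 : Q2) = ((0:Fin 2), (0:Fin 2)) := rfl
  have e1 : (1 : Q2) = ((1:Fin 2), (1:Fin 2)) := rfl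
  fin_cases i <;>
    simp only [e0, e1, bell, Matrix.cons_val_zero, Matrix.cons_val_one, Matrix.head_cons,
      Matrix.cons_val_two, Matrix.cons_val_three, Matrix.tail_cons, Fintype.sum_prod_type,
      Fin.sum_univ_two, Pi.smul_apply, Pi.add_apply, Pi.sub_apply, ket, smul_eq_mul, conj_s,
      star_mul'] <;>
    norm_num [ket, Prod.ext_iff]
  · exact (by convert key_half _ c1 using 2; ring)
  · exact (by convert key_half _ c2 using 2; ring)
  · exact (by convert key_half _ c3 using 2; ring)
  · exact (by convert key_half _ c4 using 2; ring)

lemma sep_trace_le (i : Fin 4) {σ : Mat4} (h : SepState σ) :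
    (bellProj i * σ).trace ≤ 1/2 := by
  obtain ⟨n, p, u, v, hp, hps, hu, hv, rfl⟩ := h
  rw [Finset.mul_sum, Matrix.trace_sum]
  have hterm : ∀ k, (bellProj i * ((p k : ℂ) •
      (vecMulVec (u k) (star (u k)) ⊗ₖ vecMulVec (v k) (star (v k))))).trace
      = ((p k * Complex.normSq (∑ q : Q2, star (bell i q) * (u k q.1 * v k q.2)) : ℝ) : ℂ) := by
    intro k
    rw [Matrix.mul_smul, Matrix.trace_smul, kron_eq_ketBra, bellProj,
      trace_ketBra_mul_ketBra]
    rw [smul_eq_mul, Complex.star_def, Complex.mul_conj]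
    push_cast
    ring
  rw [Finset.sum_congr rfl fun k _ => hterm k]
  rw [← Complex.ofReal_sum]
  have : (∑ k, p k * Complex.normSq (∑ q : Q2, star (bell i q) * (u k q.1 * v k q.2))) ≤ 1/2 := by
    calc _ ≤ ∑ k, p k * (1/2) := by
          refine Finset.sum_le_sum fun k _ => ?_
          exact mul_le_mul_of_nonneg_left (bell_overlap i (u k) (v k) (hu k) (hv k)) (hp k)
    _ = 1/2 := by rw [← Finset.sum_mul, hps, one_mul]
  calc ((∑ k, p k * Complex.normSq (∑ q : Q2, star (bell i q) * (u k q.1 * v k q.2)) : ℝ) : ℂ)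
      ≤ ((1/2 : ℝ) : ℂ) := by exact_mod_cast this
    _ = 1/2 := by norm_num

section Kraus
variable {k : ℕ} (K : Fin k → Mat4)

lemma kraus_add (X Y : Mat4) :
    ∑ i, K i * (X + Y) * (K i)ᴴ = (∑ i, K i * X * (K i)ᴴ) + ∑ i, K i * Y * (K i)ᴴ := by
  rw [← Finset.sum_add_distrib]
  exact Finset.sum_congr rfl fun i _ => by rw [Matrix.mul_add, Matrix.add_mul]

lemma kraus_smul (c : ℂ) (X : Mat4) :
    ∑ i, K i * (c • X) * (K i)ᴴ = c • ∑ i, K i * X * (K i)ᴴ := by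
  rw [Finset.smul_sum]
  exact Finset.sum_congr rfl fun i _ => by
    rw [Matrix.mul_smul, Matrix.smul_mul]

lemma kraus_trace (hK : ∑ i, (K i)ᴴ * K i = 1) (X : Mat4) :
    (∑ i, K i * X * (K i)ᴴ).trace = X.trace := by
  rw [Matrix.trace_sum]
  have : ∀ i : Fin k, (K i * X * (K i)ᴴ).trace = ((K i)ᴴ * K i * X).trace := fun i => by
    rw [Matrix.trace_mul_cycle]
  rw [Finset.sum_congr rfl fun i _ => this i, ← Matrix.trace_sum, ← Finset.sum_mul, hK, one_mul]

lemma kraus_psd (X : Mat4) (hX : X.PosSemidef) :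
    (∑ i, K i * X * (K i)ᴴ).PosSemidef := by
  refine Finset.sum_induction _ _ (fun a b ha hb => ha.add hb) Matrix.PosSemidef.zero
    fun i _ => hX.mul_mul_conjTranspose_same (K i)

end Kraus

lemma trace_bellProj (i : Fin 4) : (bellProj i).trace = 1 := by
  rw [bellProj, trace_ketBra]
  have h := bell_inner i i
  rw [if_pos rfl] at h
  rw [← h]
  exact Finset.sum_congr rfl fun q _ => mul_comm _ _

lemma trace_xi (j : Fin 4) : (xi j).trace = 1 := by
  fin_cases j
  · exact trace_bellProj 0
  · simp [xi, trace_ketBra, ket, Fintype.sum_prod_type, Prod.ext_iff]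
  · exact trace_bellProj 1
  · simp [xi, trace_ketBra, ket, Fintype.sum_prod_type, Prod.ext_iff]

lemma xi_psd (j : Fin 4) : (xi j).PosSemidef := by
  fin_cases j <;> exact ketBra_posSemidef _

lemma sep_pure (u v : Fin 2 → ℂ) (hu : IsUnitVec u) (hv : IsUnitVec v) :
    SepState (vecMulVec u (star u) ⊗ₖ vecMulVec v (star v)) := by
  refine ⟨1, ![1], ![u], ![v], ?_, ?_, ?_, ?_, ?_⟩
  · intro i; fin_cases i <;> norm_num
  · simp
  · intro i; fin_cases i <;> simpa using hu
  · intro i; fin_cases i <;> simpa using hv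
  · simp

lemma e0unit : IsUnitVec (![1, 0] : Fin 2 → ℂ) := by
  simp [IsUnitVec, Fin.sum_univ_two]

lemma e1unit : IsUnitVec (![0, 1] : Fin 2 → ℂ) := by
  simp [IsUnitVec, Fin.sum_univ_two]

lemma sep_ket (i j : Fin 2) : SepState (ketBra (ket i j) (ket i j)) := by
  have h := sep_pure (![if i = 0 then 1 else 0, if i = 0 then 0 else 1])
    (![if j = 0 then 1 else 0, if j = 0 then 0 else 1]) (by fin_cases i <;> simp [IsUnitVec, Fin.sum_univ_two])
    (by fin_cases j <;> simp [IsUnitVec, Fin.sum_univ_two])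
  rw [kron_eq_ketBra] at h
  convert h using 2 <;>
  · funext p
    obtain ⟨p1, p2⟩ := p
    fin_cases i <;> fin_cases j <;> fin_cases p1 <;> fin_cases p2 <;>
      simp [ket, Prod.ext_iff]


def omg : Fin 4 → ℂ := ![1, Complex.I, -1, -Complex.I]

lemma omg_normSq (k : Fin 4) : Complex.normSq (omg k) = 1 := by
  fin_cases k <;> simp [omg]

set_option maxHeartbeats 1000000 in
lemma sep_mix_matrix (a : ℝ) (ha0 : 0 ≤ a) (ha1 : a ≤ 1) (e : ℂ) (he : e = 1 ∨ e = -1) :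
      (2 * ((Real.sqrt a : ℂ) * (Real.sqrt a)) * ((Real.sqrt (1-a) : ℂ) * (Real.sqrt (1-a)))) •
        ketBra ((Real.sqrt 2 : ℂ)⁻¹ • (ket 0 0 + e • ket 1 1))
               ((Real.sqrt 2 : ℂ)⁻¹ • (ket 0 0 + e • ket 1 1)) +
      (((Real.sqrt a : ℂ) * Real.sqrt a) * ((Real.sqrt a : ℂ) * Real.sqrt a)) •
        ketBra (ket 0 1) (ket 0 1) +
      (((Real.sqrt (1-a) : ℂ) * Real.sqrt (1-a)) * ((Real.sqrt (1-a) : ℂ) * Real.sqrt (1-a))) •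
        ketBra (ket 1 0) (ket 1 0)
    = ∑ k : Fin 4, ((1/4 : ℝ) : ℂ) •
        (vecMulVec (![omg k * Real.sqrt a, (Real.sqrt (1-a) : ℂ)])
            (star (![omg k * Real.sqrt a, (Real.sqrt (1-a) : ℂ)])) ⊗ₖ
         vecMulVec (![(starRingEnd ℂ) (omg k) * Real.sqrt (1-a), e * Real.sqrt a])
            (star (![(starRingEnd ℂ) (omg k) * Real.sqrt (1-a), e * Real.sqrt a]))) := by
  simp only [kron_eq_ketBra]
  ext ⟨p1, p2⟩ ⟨q1, q2⟩
  simp only [Matrix.add_apply, Matrix.smul_apply, Matrix.sum_apply, Fin.sum_univ_four,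
    smul_eq_mul]
  rcases he with rfl | rfl <;>
  fin_cases p1 <;> fin_cases p2 <;> fin_cases q1 <;> fin_cases q2 <;>
  · simp only [omg, ketBra, Pi.smul_apply, Pi.add_apply, smul_eq_mul, ket, Prod.ext_iff,
      Matrix.cons_val_zero, Matrix.cons_val_one, Matrix.head_cons, Matrix.cons_val_two,
      Matrix.cons_val_three, Matrix.tail_cons, Pi.star_apply,
      star_mul', star_one, star_zero, conj_s, Complex.conj_ofReal, Complex.conj_I,
      Complex.conj_conj, star_add, star_smul, _root_.map_one, _root_.map_neg]
    norm_num
    all_goals (try ring_nf)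
    all_goals (try simp [s_mul_s, sq2, Complex.I_sq])
    all_goals (try ring_nf)
    all_goals (try norm_num [s_mul_s, sq2])

lemma sep_mix (a : ℝ) (ha0 : 0 ≤ a) (ha1 : a ≤ 1) (e : ℂ) (he : e = 1 ∨ e = -1) :
    SepState (
      (2 * ((Real.sqrt a : ℂ) * (Real.sqrt a)) * ((Real.sqrt (1-a) : ℂ) * (Real.sqrt (1-a)))) •
        ketBra ((Real.sqrt 2 : ℂ)⁻¹ • (ket 0 0 + e • ket 1 1))
               ((Real.sqrt 2 : ℂ)⁻¹ • (ket 0 0 + e • ket 1 1)) +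
      (((Real.sqrt a : ℂ) * Real.sqrt a) * ((Real.sqrt a : ℂ) * Real.sqrt a)) •
        ketBra (ket 0 1) (ket 0 1) +
      (((Real.sqrt (1-a) : ℂ) * Real.sqrt (1-a)) * ((Real.sqrt (1-a) : ℂ) * Real.sqrt (1-a))) •
        ketBra (ket 1 0) (ket 1 0)) := by
  have hb0 : (0:ℝ) ≤ 1 - a := by linarith
  have hsa : Real.sqrt a * Real.sqrt a = a := Real.mul_self_sqrt ha0
  have hsb : Real.sqrt (1-a) * Real.sqrt (1-a) = 1 - a := Real.mul_self_sqrt hb0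
  refine ⟨4, fun _ => 1/4,
    fun k => ![omg k * Real.sqrt a, (Real.sqrt (1-a) : ℂ)],
    fun k => ![(starRingEnd ℂ) (omg k) * Real.sqrt (1-a), e * Real.sqrt a],
    fun _ => by norm_num, ?_, ?_, ?_, sep_mix_matrix a ha0 ha1 e he⟩
  · rw [Finset.sum_const]; norm_num
  · intro k
    simp [IsUnitVec, Fin.sum_univ_two, Complex.normSq_mul, omg_normSq,
      Complex.normSq_ofReal, hsa, hsb]
  · intro k
    have : Complex.normSq ((starRingEnd ℂ) (omg k)) = 1 := by
      rw [Complex.normSq_conj, omg_normSq]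
    rcases he with rfl | rfl <;>
      simp [IsUnitVec, Fin.sum_univ_two, Complex.normSq_mul, this,
        Complex.normSq_ofReal, hsa, hsb] <;> ring

lemma bell0_eq : (Real.sqrt 2 : ℂ)⁻¹ • (ket 0 0 + (1:ℂ) • ket 1 1) = bell 0 := by
  funext p; simp [bell]; ring

lemma bell1_eq : (Real.sqrt 2 : ℂ)⁻¹ • (ket 0 0 + (-1:ℂ) • ket 1 1) = bell 1 := by
  funext p
  simp [bell, sub_eq_add_neg]; ring

lemma bell_sum01 : bellProj 0 + bellProj 1
    = ketBra (ket 0 0) (ket 0 0) + ketBra (ket 1 1) (ket 1 1) := by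
  ext p q
  fin_cases p <;> fin_cases q <;>
    simp [bellProj, ketBra, bell, ket, conj_s, Prod.ext_iff] <;>
    ring_nf <;> simp [s_mul_s, sq2]


theorem NE_linear_constraints (l : Fin 4 → ℝ)
    (h12 : l 1 ≤ l 0) (h23 : l 2 ≤ l 1) (h34 : l 3 ≤ l 2) (h4 : 0 ≤ l 3)
    (hsum : ∑ j, l j = 1)
    (T : Mat4 → Mat4) (hT : IsNE T)
    (hmap : T (∑ j, (l j : ℂ) • xi j) = ∑ i, (l i : ℂ) • bellProj i) :
    (∀ i, ∑ j, (l j : ℂ) * (bellProj i * T (xi j)).trace = (l i : ℂ)) ∧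
    (∀ j, ∑ i, (bellProj i * T (xi j)).trace = 1) ∧
    (∀ i j, 0 ≤ (bellProj i * T (xi j)).trace) ∧
    (∀ i, (bellProj i * T (xi 0)).trace + (bellProj i * T (xi 2)).trace ≤ 1) ∧
    (∀ i, ∀ a ∈ Set.Icc (0 : ℝ) 1,
      ((2 * a * (1 - a) : ℝ) : ℂ) * (bellProj i * T (xi 0)).trace +
          ((a ^ 2 : ℝ) : ℂ) * (bellProj i * T (xi 1)).trace +
          (((1 - a) ^ 2 : ℝ) : ℂ) * (bellProj i * T (xi 3)).trace ≤ 1 / 2 ∧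
      ((2 * a * (1 - a) : ℝ) : ℂ) * (bellProj i * T (xi 2)).trace +
          ((a ^ 2 : ℝ) : ℂ) * (bellProj i * T (xi 1)).trace +
          (((1 - a) ^ 2 : ℝ) : ℂ) * (bellProj i * T (xi 3)).trace ≤ 1 / 2) := by
  obtain ⟨⟨k, K, hK, hrep⟩, hNE⟩ := hT
  have hTadd : ∀ X Y, T (X + Y) = T X + T Y := fun X Y => by
    rw [hrep, hrep, hrep, kraus_add]
  have hTsmul : ∀ (c : ℂ) X, T (c • X) = c • T X := fun c X => by
    rw [hrep, hrep, kraus_smul]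
  have hTtrace : ∀ X, (T X).trace = X.trace := fun X => by
    rw [hrep, kraus_trace K hK]
  have hTpsd : ∀ X, X.PosSemidef → (T X).PosSemidef := fun X hX => by
    rw [hrep]; exact kraus_psd K X hX
  have expand : ∀ (i : Fin 4) (c1 c2 c3 : ℂ) (j1 j2 j3 : Fin 4),
      (bellProj i * T (c1 • xi j1 + c2 • xi j2 + c3 • xi j3)).trace
        = c1 * (bellProj i * T (xi j1)).trace + c2 * (bellProj i * T (xi j2)).trace
          + c3 * (bellProj i * T (xi j3)).trace := by
    intro i c1 c2 c3 j1 j2 j3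
    rw [hTadd, hTadd, hTsmul, hTsmul, hTsmul, Matrix.mul_add, Matrix.mul_add,
      Matrix.trace_add, Matrix.trace_add, Matrix.mul_smul, Matrix.mul_smul, Matrix.mul_smul,
      Matrix.trace_smul, Matrix.trace_smul, Matrix.trace_smul, smul_eq_mul, smul_eq_mul,
      smul_eq_mul]
  refine ⟨?_, ?_, ?_, ?_, ?_⟩
  · -- (1)
    intro i
    have hTsum : T (∑ j, (l j : ℂ) • xi j) = ∑ j, (l j : ℂ) • T (xi j) := by
      simp only [Fin.sum_univ_four, hTadd, hTsmul]
    have step : ∑ j, (l j : ℂ) * (bellProj i * T (xi j)).trace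
        = (bellProj i * T (∑ j, (l j : ℂ) • xi j)).trace := by
      rw [hTsum, Finset.mul_sum, Matrix.trace_sum]
      exact Finset.sum_congr rfl fun j _ => by
        rw [Matrix.mul_smul, Matrix.trace_smul, smul_eq_mul]
    rw [step, hmap, Finset.mul_sum, Matrix.trace_sum]
    have hterm : ∀ j, (bellProj i * ((l j : ℂ) • bellProj j)).trace
        = if i = j then (l j : ℂ) else 0 := by
      intro j
      rw [Matrix.mul_smul, Matrix.trace_smul, smul_eq_mul, bellProj, bellProj,
        trace_ketBra_mul_ketBra, bell_inner]
      split_ifs <;> simp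
    rw [Finset.sum_congr rfl fun j _ => hterm j]
    simp
  · -- (2)
    intro j
    calc ∑ i, (bellProj i * T (xi j)).trace = ((∑ i, bellProj i) * T (xi j)).trace := by
          rw [Finset.sum_mul, Matrix.trace_sum]
      _ = (T (xi j)).trace := by rw [bell_complete, one_mul]
      _ = 1 := by rw [hTtrace, trace_xi]
  · -- (3)
    intro i j
    rw [bellProj]
    exact trace_ketBra_mul_nonneg _ _ (hTpsd _ (xi_psd j))
  · -- (4)
    intro i
    have e02 : xi 0 + xi 2 = ketBra (ket 0 0) (ket 0 0) + ketBra (ket 1 1) (ket 1 1) :=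
      bell_sum01
    have hadd : T (xi 0) + T (xi 2)
        = T (ketBra (ket 0 0) (ket 0 0)) + T (ketBra (ket 1 1) (ket 1 1)) := by
      rw [← hTadd, ← hTadd, e02]
    calc (bellProj i * T (xi 0)).trace + (bellProj i * T (xi 2)).trace
        = (bellProj i * (T (xi 0) + T (xi 2))).trace := by
          rw [Matrix.mul_add, Matrix.trace_add]
      _ = (bellProj i * T (ketBra (ket 0 0) (ket 0 0))).trace
          + (bellProj i * T (ketBra (ket 1 1) (ket 1 1))).trace := by
          rw [hadd, Matrix.mul_add, Matrix.trace_add]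
      _ ≤ 1/2 + 1/2 :=
          add_le_add (sep_trace_le i (hNE _ (sep_ket 0 0)))
            (sep_trace_le i (hNE _ (sep_ket 1 1)))
      _ = 1 := by norm_num
  · -- (5)
    intro i a ha
    obtain ⟨ha0, ha1⟩ := Set.mem_Icc.mp ha
    have hca : (Real.sqrt a : ℂ) * (Real.sqrt a) = (a : ℂ) := by
      rw [← Complex.ofReal_mul, Real.mul_self_sqrt ha0]
    have hcb : (Real.sqrt (1-a) : ℂ) * (Real.sqrt (1-a)) = ((1-a : ℝ) : ℂ) := by
      rw [← Complex.ofReal_mul, Real.mul_self_sqrt (by linarith)]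
    have e1 : ((2 * a * (1 - a) : ℝ) : ℂ)
        = 2 * ((Real.sqrt a : ℂ) * Real.sqrt a) * ((Real.sqrt (1-a) : ℂ) * Real.sqrt (1-a)) := by
      rw [hca, hcb]; push_cast; ring
    have e2 : ((a ^ 2 : ℝ) : ℂ)
        = ((Real.sqrt a : ℂ) * Real.sqrt a) * ((Real.sqrt a : ℂ) * Real.sqrt a) := by
      rw [hca]; push_cast; ring
    have e3 : (((1 - a) ^ 2 : ℝ) : ℂ)
        = ((Real.sqrt (1-a) : ℂ) * Real.sqrt (1-a)) * ((Real.sqrt (1-a) : ℂ) * Real.sqrt (1-a)) := by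
      rw [hcb]; push_cast; ring
    constructor
    · have h := sep_mix a ha0 ha1 1 (Or.inl rfl)
      rw [bell0_eq] at h
      have hsep : SepState
          ((2 * ((Real.sqrt a : ℂ) * Real.sqrt a) * ((Real.sqrt (1-a) : ℂ) * Real.sqrt (1-a))) • xi 0
            + (((Real.sqrt a : ℂ) * Real.sqrt a) * ((Real.sqrt a : ℂ) * Real.sqrt a)) • xi 1
            + (((Real.sqrt (1-a) : ℂ) * Real.sqrt (1-a)) * ((Real.sqrt (1-a) : ℂ) * Real.sqrt (1-a))) • xi 3) := h
      calc ((2 * a * (1 - a) : ℝ) : ℂ) * (bellProj i * T (xi 0)).trace +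
            ((a ^ 2 : ℝ) : ℂ) * (bellProj i * T (xi 1)).trace +
            (((1 - a) ^ 2 : ℝ) : ℂ) * (bellProj i * T (xi 3)).trace
          = (bellProj i * T
              ((2 * ((Real.sqrt a : ℂ) * Real.sqrt a) * ((Real.sqrt (1-a) : ℂ) * Real.sqrt (1-a))) • xi 0
                + (((Real.sqrt a : ℂ) * Real.sqrt a) * ((Real.sqrt a : ℂ) * Real.sqrt a)) • xi 1
                + (((Real.sqrt (1-a) : ℂ) * Real.sqrt (1-a)) * ((Real.sqrt (1-a) : ℂ) * Real.sqrt (1-a))) • xi 3)).trace := by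
            rw [expand, ← e1, ← e2, ← e3]
        _ ≤ 1/2 := sep_trace_le i (hNE _ hsep)
    · have h := sep_mix a ha0 ha1 (-1) (Or.inr rfl)
      rw [bell1_eq] at h
      have hsep : SepState
          ((2 * ((Real.sqrt a : ℂ) * Real.sqrt a) * ((Real.sqrt (1-a) : ℂ) * Real.sqrt (1-a))) • xi 2
            + (((Real.sqrt a : ℂ) * Real.sqrt a) * ((Real.sqrt a : ℂ) * Real.sqrt a)) • xi 1
            + (((Real.sqrt (1-a) : ℂ) * Real.sqrt (1-a)) * ((Real.sqrt (1-a) : ℂ) * Real.sqrt (1-a))) • xi 3) := h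
      calc ((2 * a * (1 - a) : ℝ) : ℂ) * (bellProj i * T (xi 2)).trace +
            ((a ^ 2 : ℝ) : ℂ) * (bellProj i * T (xi 1)).trace +
            (((1 - a) ^ 2 : ℝ) : ℂ) * (bellProj i * T (xi 3)).trace
          = (bellProj i * T
              ((2 * ((Real.sqrt a : ℂ) * Real.sqrt a) * ((Real.sqrt (1-a) : ℂ) * Real.sqrt (1-a))) • xi 2
                + (((Real.sqrt a : ℂ) * Real.sqrt a) * ((Real.sqrt a : ℂ) * Real.sqrt a)) • xi 1
                + (((Real.sqrt (1-a) : ℂ) * Real.sqrt (1-a)) * ((Real.sqrt (1-a) : ℂ) * Real.sqrt (1-a))) • xi 3)).trace := by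
            rw [expand, ← e1, ← e2, ← e3]
        _ ≤ 1/2 := sep_trace_le i (hNE _ hsep)
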